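/- arXiv:2502.15748 — 2 statements merged into one kernel-verified Lean document; each statement's English description precedes it below -/
import Mathlib

section
/- For a commutative Krasner hyperring R with unit, Spec(R) is homeomorphic to Spec(R/nil(R)), where nil(R) is the hyperideal of nilpotent elements. -/
universe u

/-- A commutative Krasner hyperring with unit: `(R,+)` is a canonical hypergroup
(multivalued addition), `(R,·)` is a commutative monoid, `·` distributes over `+`
and `0` is absorbing. -/
structure KHR (R : Type u) where
  hadd : R → R → Set R
  mul : R → R → R
  zero : R
  one : R
  neg : R → R
  hadd_comm : ∀ a b, hadd a b = hadd b a
  hadd_assoc : ∀ a b c, (⋃ x ∈ hadd a b, hadd x c) = ⋃ y ∈ hadd b c, hadd a y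
  zero_hadd : ∀ a, hadd zero a = {a}
  neg_mem : ∀ a, zero ∈ hadd a (neg a)
  neg_unique : ∀ a b, zero ∈ hadd a b → b = neg a
  reversible : ∀ a b c, c ∈ hadd a b → b ∈ hadd (neg a) c
  mul_assoc : ∀ a b c, mul (mul a b) c = mul a (mul b c)
  mul_comm : ∀ a b, mul a b = mul b a
  one_mul : ∀ a, mul one a = a
  zero_mul : ∀ a, mul zero a = zero
  distrib : ∀ a b c, (fun x => mul a x) '' hadd b c = hadd (mul a b) (mul a c)

namespace KHR

variable {R : Type u} {S : Type u} {T : Type u} {Q : Type u}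

/-- Sum of two subsets: `A + B = ⋃ {a + b : a ∈ A, b ∈ B}`. -/
def sumSet (H : KHR R) (A B : Set R) : Set R := ⋃ a ∈ A, ⋃ b ∈ B, H.hadd a b

/-- The coset `x + I`. -/
def coset (H : KHR R) (x : R) (I : Set R) : Set R := H.sumSet {x} I

/-- Hyperideal of a Krasner hyperring. -/
def IsHyperideal (H : KHR R) (I : Set R) : Prop :=
  H.zero ∈ I ∧ (∀ a ∈ I, ∀ b ∈ I, H.hadd a b ⊆ I) ∧ (∀ a ∈ I, H.neg a ∈ I) ∧
    ∀ r : R, ∀ a ∈ I, H.mul r a ∈ I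

/-- Prime hyperideal. -/
def IsPrime (H : KHR R) (P : Set R) : Prop :=
  H.IsHyperideal P ∧ P ≠ Set.univ ∧ ∀ a b : R, H.mul a b ∈ P → a ∈ P ∨ b ∈ P

/-- Maximal hyperideal. -/
def IsMaximal (H : KHR R) (M : Set R) : Prop :=
  H.IsHyperideal M ∧ M ≠ Set.univ ∧ ∀ J : Set R, H.IsHyperideal J → M ⊂ J → J = Set.univ

/-- The prime spectrum. -/
def Spectrum (H : KHR R) : Type u := {P : Set R // H.IsPrime P}

/-- The Zariski-closed set attached to a set of elements. -/
def V (H : KHR R) (s : Set R) : Set H.Spectrum := {P | s ⊆ P.1}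

/-- The basic Zariski-open set attached to an element. -/
def W (H : KHR R) (x : R) : Set H.Spectrum := {P | x ∉ P.1}

/-- The hyperideal generated by a set. -/
def genIdeal (H : KHR R) (s : Set R) : Set R := ⋂₀ {I | H.IsHyperideal I ∧ s ⊆ I}

/-- The product `IJ` of two hyperideals. -/
def mulIdeal (H : KHR R) (I J : Set R) : Set R :=
  H.genIdeal {x | ∃ a ∈ I, ∃ b ∈ J, x = H.mul a b}

/-- The Zariski topology on the prime spectrum. -/
def zariski (H : KHR R) : TopologicalSpace H.Spectrum :=
  TopologicalSpace.generateFrom {U | ∃ I : Set R, H.IsHyperideal I ∧ U = (H.V I)ᶜ}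

/-- Powers of an element. -/
def pow (H : KHR R) (x : R) : ℕ → R
  | 0 => H.one
  | n+1 => H.mul x (H.pow x n)

/-- The nilradical. -/
def nil (H : KHR R) : Set R := {x | ∃ n : ℕ, H.pow x (n+1) = H.zero}

/-- The radical of a hyperideal. -/
def radical (H : KHR R) (I : Set R) : Set R := {x | ∃ n : ℕ, H.pow x (n+1) ∈ I}

/-- Units. -/
def IsUnit (H : KHR R) (x : R) : Prop := ∃ y, H.mul x y = H.one

/-- Good homomorphism of Krasner hyperrings. -/
structure GoodHom (H : KHR R) (K : KHR S) where
  toFun : R → S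
  map_hadd : ∀ a b, toFun '' H.hadd a b = K.hadd (toFun a) (toFun b)
  map_mul : ∀ a b, toFun (H.mul a b) = K.mul (toFun a) (toFun b)
  map_zero : toFun H.zero = K.zero
  map_one : toFun H.one = K.one

theorem comap_prime (H : KHR R) (K : KHR S) (f : GoodHom H K) {P : Set S}
    (hP : K.IsPrime P) : H.IsPrime (f.toFun ⁻¹' P) := by
  obtain ⟨⟨h0, haddc, hneg, hmulc⟩, hne, hpr⟩ := hP
  refine ⟨⟨?_, ?_, ?_, ?_⟩, ?_, ?_⟩
  · show f.toFun H.zero ∈ P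
    rw [f.map_zero]; exact h0
  · intro a ha b hb c hc
    have : f.toFun c ∈ K.hadd (f.toFun a) (f.toFun b) := by
      rw [← f.map_hadd]; exact ⟨c, hc, rfl⟩
    exact haddc _ ha _ hb this
  · intro a ha
    have hz : K.zero ∈ K.hadd (f.toFun a) (f.toFun (H.neg a)) := by
      rw [← f.map_hadd, ← f.map_zero]
      exact ⟨H.zero, H.neg_mem a, rfl⟩
    have : f.toFun (H.neg a) = K.neg (f.toFun a) := K.neg_unique _ _ hz
    show f.toFun (H.neg a) ∈ P
    rw [this]; exact hneg _ ha
  · intro r a ha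
    show f.toFun (H.mul r a) ∈ P
    rw [f.map_mul]; exact hmulc _ _ ha
  · intro hU
    apply hne
    ext s
    simp only [Set.mem_univ, iff_true]
    have h1 : f.toFun H.one ∈ P := by
      have : H.one ∈ f.toFun ⁻¹' P := by rw [hU]; trivial
      exact this
    have : K.mul s (f.toFun H.one) ∈ P := hmulc s _ h1
    rwa [f.map_one, K.mul_comm, K.one_mul] at this
  · intro a b hab
    have : K.mul (f.toFun a) (f.toFun b) ∈ P := by rw [← f.map_mul]; exact hab
    exact hpr _ _ this

/-- The induced map on spectra. -/
def specMap (H : KHR R) (K : KHR S) (f : GoodHom H K) : K.Spectrum → H.Spectrum :=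
  fun P => ⟨f.toFun ⁻¹' P.1, comap_prime H K f P.2⟩

/-- `K` is the quotient hyperring of `H` by the hyperideal `I`, witnessed by the
canonical projection. -/
structure IsQuotient (H : KHR R) (K : KHR Q) (I : Set R) where
  hom : GoodHom H K
  surj : Function.Surjective hom.toFun
  fiber : ∀ x y, hom.toFun x = hom.toFun y ↔ H.coset x I = H.coset y I

/-- Strongly regular (equivalence) relation on a Krasner hyperring. -/
def StronglyRegular (H : KHR R) (ρ : R → R → Prop) : Prop :=
  Equivalence ρ ∧ ∀ a b c d, ρ a b → ρ c d →
    (∀ x ∈ H.hadd a c, ∀ y ∈ H.hadd b d, ρ x y) ∧ ρ (H.mul a c) (H.mul b d)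

/-- The fundamental relation `γ*`: the smallest strongly regular relation. -/
def gamma (H : KHR R) : R → R → Prop := fun x y => ∀ ρ, H.StronglyRegular ρ → ρ x y

/-- The zero class `γ*(0)` of the fundamental relation. -/
def gammaZero (H : KHR R) : Set R := {x | H.gamma x H.zero}



/-- The product of two Krasner hyperrings, with componentwise hyperoperations. -/
def prodKHR (H : KHR R) (K : KHR S) : KHR (R × S) where
  hadd a b := H.hadd a.1 b.1 ×ˢ K.hadd a.2 b.2
  mul a b := (H.mul a.1 b.1, K.mul a.2 b.2)
  zero := (H.zero, K.zero)
  one := (H.one, K.one)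
  neg a := (H.neg a.1, K.neg a.2)
  hadd_comm a b := by beta_reduce; rw [H.hadd_comm, K.hadd_comm]
  hadd_assoc a b c := by
    beta_reduce
    have h1 := H.hadd_assoc a.1 b.1 c.1
    have h2 := K.hadd_assoc a.2 b.2 c.2
    ext ⟨p, q⟩
    have e1 : p ∈ (⋃ x ∈ H.hadd a.1 b.1, H.hadd x c.1) ↔
        p ∈ ⋃ y ∈ H.hadd b.1 c.1, H.hadd a.1 y := by rw [h1]
    have e2 : q ∈ (⋃ x ∈ K.hadd a.2 b.2, K.hadd x c.2) ↔
        q ∈ ⋃ y ∈ K.hadd b.2 c.2, K.hadd a.2 y := by rw [h2]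
    simp only [Set.mem_iUnion, Set.mem_prod] at e1 e2 ⊢
    constructor
    · rintro ⟨⟨x1, x2⟩, ⟨⟨hx1, hx2⟩, hp, hq⟩⟩
      obtain ⟨y1, hy1, hp'⟩ := e1.1 ⟨x1, hx1, hp⟩
      obtain ⟨y2, hy2, hq'⟩ := e2.1 ⟨x2, hx2, hq⟩
      exact ⟨(y1, y2), ⟨hy1, hy2⟩, hp', hq'⟩
    · rintro ⟨⟨y1, y2⟩, ⟨⟨hy1, hy2⟩, hp, hq⟩⟩
      obtain ⟨x1, hx1, hp'⟩ := e1.2 ⟨y1, hy1, hp⟩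
      obtain ⟨x2, hx2, hq'⟩ := e2.2 ⟨y2, hy2, hq⟩
      exact ⟨(x1, x2), ⟨hx1, hx2⟩, hp', hq'⟩
  zero_hadd a := by
    beta_reduce
    rw [H.zero_hadd, K.zero_hadd, Set.singleton_prod_singleton]
  neg_mem a := ⟨H.neg_mem a.1, K.neg_mem a.2⟩
  neg_unique a b h := Prod.ext (H.neg_unique _ _ h.1) (K.neg_unique _ _ h.2)
  reversible a b c h := ⟨H.reversible _ _ _ h.1, K.reversible _ _ _ h.2⟩
  mul_assoc a b c := Prod.ext (H.mul_assoc _ _ _) (K.mul_assoc _ _ _)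
  mul_comm a b := Prod.ext (H.mul_comm _ _) (K.mul_comm _ _)
  one_mul a := Prod.ext (H.one_mul _) (K.one_mul _)
  zero_mul a := Prod.ext (H.zero_mul _) (K.zero_mul _)
  distrib a b c := by
    ext ⟨p, q⟩
    simp only [Set.mem_image, Set.mem_prod]
    constructor
    · rintro ⟨⟨x, y⟩, ⟨hx, hy⟩, h⟩
      obtain ⟨h1, h2⟩ := Prod.mk.injEq .. ▸ h
      constructor
      · rw [← H.distrib]; exact ⟨x, hx, h1⟩
      · rw [← K.distrib]; exact ⟨y, hy, h2⟩
    · rintro ⟨hp, hq⟩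
      rw [← H.distrib] at hp
      rw [← K.distrib] at hq
      obtain ⟨x, hx, hx'⟩ := hp
      obtain ⟨y, hy, hy'⟩ := hq
      exact ⟨(x, y), ⟨hx, hy⟩, by simp [hx', hy']⟩


end KHR

/-!
The projection `f : R → R/nil(R)` identifies `P` with `f⁻¹(f(P))` for every prime `P`: if
`f x = f y` with `y ∈ P`, then `x ∈ y + b` for some nilpotent `b`, and `b ∈ P` because nilpotents
lie in every prime. Hence `P ↦ f(P)` and `P' ↦ f⁻¹(P')` are mutually inverse bijections between
the spectra, and both carry basic open sets to basic open sets, since `V(I)` corresponds to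
`V(f(I))` and `V(J)` to `V(f⁻¹(J))`.
-/

namespace KHR

variable {R Q : Type u} {H : KHR R} {K : KHR Q}

instance (H : KHR R) : TopologicalSpace H.Spectrum := H.zariski

theorem IsHyperideal.eq_univ_of_one_mem {I : Set R} (hI : H.IsHyperideal I) (h1 : H.one ∈ I) :
    I = Set.univ :=
  Set.eq_univ_of_forall fun s => by
    have := hI.2.2.2 s H.one h1
    rwa [H.mul_comm, H.one_mul] at this

theorem IsPrime.one_notMem {P : Set R} (hP : H.IsPrime P) : H.one ∉ P :=
  fun h1 => hP.2.1 (hP.1.eq_univ_of_one_mem h1)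

theorem IsPrime.mem_of_pow_mem {P : Set R} (hP : H.IsPrime P) {x : R} :
    ∀ n : ℕ, H.pow x (n + 1) ∈ P → x ∈ P
  | 0, h => (hP.2.2 x H.one h).resolve_right hP.one_notMem
  | n + 1, h => (hP.2.2 x _ h).elim id (hP.mem_of_pow_mem n)

theorem nil_subset_of_isPrime {P : Set R} (hP : H.IsPrime P) : H.nil ⊆ P :=
  fun _ ⟨n, hn⟩ => hP.mem_of_pow_mem n (hn ▸ hP.1.1)

theorem zero_mem_nil : H.zero ∈ H.nil := ⟨0, H.zero_mul _⟩

theorem mem_coset_iff {I : Set R} {x y : R} : y ∈ H.coset x I ↔ ∃ b ∈ I, y ∈ H.hadd x b := by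
  simp only [coset, sumSet, Set.mem_iUnion, Set.mem_singleton_iff, exists_prop, exists_eq_left]

theorem mem_coset_self {I : Set R} (h0 : H.zero ∈ I) (x : R) : x ∈ H.coset x I :=
  mem_coset_iff.2 ⟨H.zero, h0, by rw [H.hadd_comm, H.zero_hadd]; rfl⟩

theorem IsQuotient.preimage_image_eq {I P : Set R} (q : IsQuotient H K I) (h0 : H.zero ∈ I)
    (hP : H.IsPrime P) (hIP : I ⊆ P) : q.hom.toFun ⁻¹' (q.hom.toFun '' P) = P := by
  refine (Set.subset_preimage_image _ _).antisymm' ?_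
  rintro x ⟨y, hy, hyx⟩
  obtain ⟨b, hb, hx⟩ := mem_coset_iff.1 ((q.fiber y x).1 hyx ▸ mem_coset_self h0 x)
  exact hP.1.2.1 y hy b (hIP hb) hx

namespace GoodHom

variable (f : GoodHom H K)

theorem mem_hadd_of_mem {a b c : R} (hc : c ∈ H.hadd a b) :
    f.toFun c ∈ K.hadd (f.toFun a) (f.toFun b) :=
  f.map_hadd a b ▸ ⟨c, hc, rfl⟩

theorem map_neg (a : R) : f.toFun (H.neg a) = K.neg (f.toFun a) :=
  K.neg_unique _ _ (f.map_zero ▸ f.mem_hadd_of_mem (H.neg_mem a))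

theorem isHyperideal_preimage {J : Set Q} (hJ : K.IsHyperideal J) :
    H.IsHyperideal (f.toFun ⁻¹' J) := by
  obtain ⟨h0, hadd, hneg, hmul⟩ := hJ
  refine ⟨?_, fun a ha b hb c hc => hadd _ ha _ hb (f.mem_hadd_of_mem hc), fun a ha => ?_,
    fun r a ha => ?_⟩
  · simpa only [Set.mem_preimage, f.map_zero] using h0
  · simpa only [Set.mem_preimage, f.map_neg] using hneg _ ha
  · simpa only [Set.mem_preimage, f.map_mul] using hmul _ _ ha

theorem isHyperideal_image (hs : Function.Surjective f.toFun) {I : Set R}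
    (hI : H.IsHyperideal I) : K.IsHyperideal (f.toFun '' I) := by
  obtain ⟨h0, hadd, hneg, hmul⟩ := hI
  refine ⟨⟨H.zero, h0, f.map_zero⟩, ?_, ?_, ?_⟩
  · rintro _ ⟨a, ha, rfl⟩ _ ⟨b, hb, rfl⟩ c hc
    rw [← f.map_hadd] at hc
    obtain ⟨x, hx, rfl⟩ := hc
    exact ⟨x, hadd a ha b hb hx, rfl⟩
  · rintro _ ⟨a, ha, rfl⟩
    exact ⟨H.neg a, hneg a ha, f.map_neg a⟩
  · rintro r _ ⟨a, ha, rfl⟩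
    obtain ⟨s, rfl⟩ := hs r
    exact ⟨H.mul s a, hmul s a ha, f.map_mul s a⟩

theorem isPrime_image (hs : Function.Surjective f.toFun) {P : Set R} (hP : H.IsPrime P)
    (hsat : f.toFun ⁻¹' (f.toFun '' P) = P) : K.IsPrime (f.toFun '' P) := by
  refine ⟨f.isHyperideal_image hs hP.1, fun htop => hP.2.1 ?_, ?_⟩
  · rw [← hsat, htop, Set.preimage_univ]
  · intro a b hab
    obtain ⟨x, rfl⟩ := hs a
    obtain ⟨y, rfl⟩ := hs b
    have hxy : H.mul x y ∈ f.toFun ⁻¹' (f.toFun '' P) := by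
      rw [Set.mem_preimage, f.map_mul]; exact hab
    rw [hsat] at hxy
    exact (hP.2.2 x y hxy).imp (Set.mem_image_of_mem _) (Set.mem_image_of_mem _)

theorem preimage_specMap_compl_V (I : Set R) :
    specMap H K f ⁻¹' (H.V I)ᶜ = (K.V (f.toFun '' I))ᶜ := by
  ext P
  exact not_congr Set.image_subset_iff.symm

theorem continuous_specMap (hs : Function.Surjective f.toFun) : Continuous (specMap H K f) :=
  continuous_generateFrom_iff.2 <| by
    rintro _ ⟨I, hI, rfl⟩
    rw [preimage_specMap_compl_V]
    exact TopologicalSpace.isOpen_generateFrom_of_mem ⟨_, f.isHyperideal_image hs hI, rfl⟩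

section Saturated

variable (hs : Function.Surjective f.toFun)
  (hsat : ∀ P, H.IsPrime P → f.toFun ⁻¹' (f.toFun '' P) = P)

def specImage : H.Spectrum → K.Spectrum :=
  fun P => ⟨f.toFun '' P.1, f.isPrime_image hs P.2 (hsat P.1 P.2)⟩

theorem preimage_specImage_compl_V (J : Set Q) :
    f.specImage hs hsat ⁻¹' (K.V J)ᶜ = (H.V (f.toFun ⁻¹' J))ᶜ := by
  ext P
  show ¬J ⊆ f.toFun '' P.1 ↔ ¬f.toFun ⁻¹' J ⊆ P.1
  exact not_congr ⟨fun h => hsat P.1 P.2 ▸ Set.preimage_mono h,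
    fun h => Set.image_preimage_eq J hs ▸ Set.image_mono h⟩

theorem continuous_specImage : Continuous (f.specImage hs hsat) :=
  continuous_generateFrom_iff.2 <| by
    rintro _ ⟨J, hJ, rfl⟩
    rw [preimage_specImage_compl_V]
    exact TopologicalSpace.isOpen_generateFrom_of_mem ⟨_, f.isHyperideal_preimage hJ, rfl⟩

def specHomeomorph : K.Spectrum ≃ₜ H.Spectrum where
  toFun := specMap H K f
  invFun := f.specImage hs hsat
  left_inv P := Subtype.ext (Set.image_preimage_eq P.1 hs)
  right_inv P := Subtype.ext (hsat P.1 P.2)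
  continuous_toFun := f.continuous_specMap hs
  continuous_invFun := f.continuous_specImage hs hsat

end Saturated

end GoodHom

end KHR

/-- For a commutative Krasner hyperring `R` with unit, `Spec R` is
homeomorphic to `Spec (R/nil R)`, via the map on spectra induced by the projection. -/
theorem stmt6 {R Q : Type u} (H : KHR R) (K : KHR Q)
    (q : KHR.IsQuotient H K H.nil) :
    ∃ e : @Homeomorph K.Spectrum H.Spectrum K.zariski H.zariski,
      ∀ P : K.Spectrum, e P = KHR.specMap H K q.hom P := by
  have hsat : ∀ P, H.IsPrime P → q.hom.toFun ⁻¹' (q.hom.toFun '' P) = P := fun _ hP =>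
    q.preimage_image_eq KHR.zero_mem_nil hP (KHR.nil_subset_of_isPrime hP)
  exact ⟨q.hom.specHomeomorph q.surj hsat, fun _ => rfl⟩
end

section
/- For a commutative Krasner hyperring R with unit, Spec(R) with the Zariski topology is irreducible if and only if nil(R) is a prime hyperideal of R. In particular, if R is a hyperdomain then Spec(R) is irreducible. -/
universe u

namespace KHR

variable {R : Type u}

lemma hyperideal_sInter (H : KHR R) {S : Set (Set R)} (h : ∀ I ∈ S, H.IsHyperideal I) :
    H.IsHyperideal (⋂₀ S) := by
  refine ⟨fun I hI => (h I hI).1, ?_, ?_, ?_⟩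
  · intro a ha b hb c hc I hI
    exact (h I hI).2.1 a (ha I hI) b (hb I hI) hc
  · intro a ha I hI; exact (h I hI).2.2.1 a (ha I hI)
  · intro r a ha I hI; exact (h I hI).2.2.2 r a (ha I hI)

lemma hyperideal_univ (H : KHR R) : H.IsHyperideal (Set.univ : Set R) :=
  ⟨trivial, fun _ _ _ _ _ _ => trivial, fun _ _ => trivial, fun _ _ _ => trivial⟩

lemma mul_one' (H : KHR R) (a : R) : H.mul a H.one = a := by
  rw [H.mul_comm, H.one_mul]

lemma mul_zero' (H : KHR R) (a : R) : H.mul a H.zero = H.zero := by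
  rw [H.mul_comm, H.zero_mul]

lemma pow_one' (H : KHR R) (x : R) : H.pow x 1 = x := by
  show H.mul x (H.pow x 0) = x
  show H.mul x H.one = x
  exact H.mul_one' x

lemma pow_add' (H : KHR R) (x : R) (m n : ℕ) :
    H.pow x (m + n) = H.mul (H.pow x m) (H.pow x n) := by
  induction m with
  | zero => simp only [Nat.zero_add]; show _ = H.mul H.one _; rw [H.one_mul]
  | succ m ih =>
      have : m + 1 + n = (m + n) + 1 := by omega
      rw [this]
      show H.mul x (H.pow x (m + n)) = H.mul (H.mul x (H.pow x m)) (H.pow x n)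
      rw [ih, H.mul_assoc]

lemma one_not_mem_prime (H : KHR R) {P : Set R} (hP : H.IsPrime P) : H.one ∉ P := by
  intro h1
  apply hP.2.1
  ext r
  simp only [Set.mem_univ, iff_true]
  have := hP.1.2.2.2 r H.one h1
  rwa [H.mul_one'] at this

lemma pow_mem_prime (H : KHR R) {P : Set R} (hP : H.IsPrime P) {x : R} {n : ℕ}
    (h : H.pow x (n + 1) ∈ P) : x ∈ P := by
  induction n with
  | zero => rwa [H.pow_one'] at h
  | succ n ih =>
      have : H.mul x (H.pow x (n + 1)) ∈ P := h
      rcases hP.2.2 _ _ this with h' | h'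
      · exact h'
      · exact ih h'

lemma nil_subset_prime (H : KHR R) {P : Set R} (hP : H.IsPrime P) : H.nil ⊆ P := by
  rintro x ⟨n, hn⟩
  apply H.pow_mem_prime hP (n := n)
  rw [hn]; exact hP.1.1

lemma neg_neg' (H : KHR R) (a : R) : H.neg (H.neg a) = a := by
  symm
  apply H.neg_unique
  rw [H.hadd_comm]
  exact H.neg_mem a

lemma mul_neg' (H : KHR R) (a b : R) : H.mul a (H.neg b) = H.neg (H.mul a b) := by
  apply H.neg_unique
  have : H.zero ∈ (fun x => H.mul a x) '' H.hadd b (H.neg b) := by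
    exact ⟨H.zero, H.neg_mem b, H.mul_zero' a⟩
  rwa [H.distrib] at this

lemma assoc_mem (H : KHR R) {a b c z : R} :
    (∃ x ∈ H.hadd a b, z ∈ H.hadd x c) ↔ ∃ y ∈ H.hadd b c, z ∈ H.hadd a y := by
  have h := Set.ext_iff.mp (H.hadd_assoc a b c) z
  simpa only [Set.mem_iUnion, exists_prop] using h

lemma neg_mem_hadd (H : KHR R) {a b c : R} (h : c ∈ H.hadd a b) :
    H.neg c ∈ H.hadd (H.neg a) (H.neg b) := by
  have h1 : a ∈ H.hadd (H.neg b) c := H.reversible b a c (H.hadd_comm a b ▸ h)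
  have h2 : H.neg b ∈ H.hadd (H.neg c) a := H.reversible c (H.neg b) a (H.hadd_comm _ _ ▸ h1)
  have h3 : H.neg c ∈ H.hadd (H.neg a) (H.neg b) :=
    H.reversible a (H.neg c) (H.neg b) (H.hadd_comm _ _ ▸ h2)
  exact h3

lemma medial (H : KHR R) {a b c d p q z : R} (hp : p ∈ H.hadd a b) (hq : q ∈ H.hadd c d)
    (hz : z ∈ H.hadd p q) : ∃ u ∈ H.hadd a c, ∃ v ∈ H.hadd b d, z ∈ H.hadd u v := by
  obtain ⟨y1, hy1, hz1⟩ := H.assoc_mem.mp ⟨p, hp, hz⟩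
  obtain ⟨w, hw, hy1'⟩ := H.assoc_mem.mpr ⟨q, hq, hy1⟩
  obtain ⟨t, ht, hz2⟩ := H.assoc_mem.mpr ⟨y1, hy1', hz1⟩
  obtain ⟨u, hu, ht'⟩ := H.assoc_mem.mpr ⟨w, H.hadd_comm b c ▸ hw, ht⟩
  obtain ⟨v, hv, hz3⟩ := H.assoc_mem.mp ⟨t, ht', hz2⟩
  exact ⟨u, hu, v, hv, hz3⟩

end KHR

namespace KHR

variable {R : Type u}

/-- The set `M + Ra`. -/
def Jext (H : KHR R) (M : Set R) (a : R) : Set R :=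
  {z | ∃ m ∈ M, ∃ r : R, z ∈ H.hadd m (H.mul r a)}

lemma hadd_zero' (H : KHR R) (a : R) : H.hadd a H.zero = {a} := by
  rw [H.hadd_comm, H.zero_hadd]

lemma mem_Jext_self (H : KHR R) {M : Set R} (hM : H.IsHyperideal M) (a : R) :
    a ∈ H.Jext M a := by
  refine ⟨H.zero, hM.1, H.one, ?_⟩
  rw [H.one_mul, H.zero_hadd]; rfl

lemma subset_Jext (H : KHR R) {M : Set R} (a : R) : M ⊆ H.Jext M a := by
  intro m hm
  refine ⟨m, hm, H.zero, ?_⟩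
  rw [H.zero_mul, H.hadd_zero']; rfl

lemma Jext_hyperideal (H : KHR R) {M : Set R} (hM : H.IsHyperideal M) (a : R) :
    H.IsHyperideal (H.Jext M a) := by
  obtain ⟨h0, hadd, hneg, hmul⟩ := hM
  refine ⟨H.subset_Jext a h0, ?_, ?_, ?_⟩
  · rintro p ⟨m, hm, r, hp⟩ q ⟨m', hm', r', hq⟩ z hz
    obtain ⟨u, hu, v, hv, hz'⟩ := H.medial hp hq hz
    have hv' : v ∈ (fun x => H.mul a x) '' H.hadd r r' := by
      rw [H.distrib, H.mul_comm a r, H.mul_comm a r']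
      exact hv
    obtain ⟨s, _, hs⟩ := hv'
    refine ⟨u, hadd m hm m' hm' hu, s, ?_⟩
    rw [H.mul_comm s a, show H.mul a s = v from hs]
    exact hz'
  · rintro p ⟨m, hm, r, hp⟩
    refine ⟨H.neg m, hneg m hm, H.neg r, ?_⟩
    have := H.neg_mem_hadd hp
    rwa [show H.neg (H.mul r a) = H.mul (H.neg r) a by
      rw [H.mul_comm (H.neg r) a, H.mul_neg', H.mul_comm a r]] at this
  · rintro s p ⟨m, hm, r, hp⟩
    refine ⟨H.mul s m, hmul s m hm, H.mul s r, ?_⟩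
    have : H.mul s p ∈ (fun x => H.mul s x) '' H.hadd m (H.mul r a) := ⟨p, hp, rfl⟩
    rwa [H.distrib, ← H.mul_assoc] at this

lemma Jext_mul_mem (H : KHR R) {M : Set R} (hM : H.IsHyperideal M) {a b p q : R}
    (hab : H.mul a b ∈ M) (hp : p ∈ H.Jext M a) (hq : q ∈ H.Jext M b) :
    H.mul p q ∈ M := by
  obtain ⟨m, hm, r, hp⟩ := hp
  obtain ⟨m', hm', s, hq⟩ := hq
  have h1 : H.mul (H.mul r a) q ∈ M := by
    have : H.mul (H.mul r a) q ∈ (fun x => H.mul (H.mul r a) x) '' H.hadd m' (H.mul s b) :=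
      ⟨q, hq, rfl⟩
    rw [H.distrib] at this
    have hA : H.mul (H.mul r a) m' ∈ M := hM.2.2.2 _ _ hm'
    have hB : H.mul (H.mul r a) (H.mul s b) ∈ M := by
      have e : H.mul (H.mul r a) (H.mul s b) = H.mul (H.mul r s) (H.mul a b) := by
        rw [H.mul_assoc, H.mul_assoc, H.mul_comm a (H.mul s b), H.mul_assoc, H.mul_comm b a]
      rw [e]; exact hM.2.2.2 _ _ hab
    exact hM.2.1 _ hA _ hB this
  have : H.mul q p ∈ (fun x => H.mul q x) '' H.hadd m (H.mul r a) := ⟨p, hp, rfl⟩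
  rw [H.distrib] at this
  have hA : H.mul q m ∈ M := hM.2.2.2 _ _ hm
  have hB : H.mul q (H.mul r a) ∈ M := by rw [H.mul_comm q (H.mul r a)]; exact h1
  have := hM.2.1 _ hA _ hB this
  rwa [H.mul_comm q p] at this

/-- Zorn: every non-nilpotent avoids some prime. -/
lemma exists_prime_not_mem (H : KHR R) {x : R} (hx : x ∉ H.nil) :
    ∃ P : Set R, H.IsPrime P ∧ x ∉ P := by
  have hpow : ∀ n, H.pow x n ≠ H.zero := by
    intro n
    cases n with
    | zero =>
        intro h10
        have h1 : H.one = H.zero := h10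
        apply hx
        refine ⟨0, ?_⟩
        rw [H.pow_one']
        calc x = H.mul H.one x := (H.one_mul x).symm
          _ = H.mul H.zero x := by rw [h1]
          _ = H.zero := H.zero_mul x
    | succ n => exact fun h => hx ⟨n, h⟩
  set F : Set (Set R) := {I | H.IsHyperideal I ∧ ∀ n, H.pow x n ∉ I} with hF
  have hzF : ({H.zero} : Set R) ∈ F := by
    constructor
    · refine ⟨rfl, ?_, ?_, ?_⟩
      · rintro a rfl b rfl
        rw [H.zero_hadd]
      · rintro a rfl
        have : H.neg H.zero = H.zero :=
          (H.neg_unique H.zero H.zero (by rw [H.zero_hadd]; exact rfl)).symm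
        simp [this]
      · rintro r a rfl
        exact H.mul_zero' r
    · intro n hn
      exact hpow n hn
  obtain ⟨M, -, hMF, hMmax⟩ : ∃ M, ({H.zero} : Set R) ⊆ M ∧ M ∈ F ∧
      ∀ J ∈ F, M ⊆ J → J ⊆ M := by
    obtain ⟨M, hM1, hM2⟩ := zorn_subset_nonempty F (fun c hcF hchain hcne => by
      obtain ⟨I0, hI0⟩ := hcne
      refine ⟨⋃₀ c, ⟨⟨?_, ?_, ?_, ?_⟩, ?_⟩, fun s hs => Set.subset_sUnion_of_mem hs⟩
      · exact ⟨I0, hI0, (hcF hI0).1.1⟩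
      · rintro a ⟨I, hI, ha⟩ b ⟨J, hJ, hb⟩ z hz
        rcases hchain.total hI hJ with hIJ | hJI
        · exact ⟨J, hJ, (hcF hJ).1.2.1 a (hIJ ha) b hb hz⟩
        · exact ⟨I, hI, (hcF hI).1.2.1 a ha b (hJI hb) hz⟩
      · rintro a ⟨I, hI, ha⟩
        exact ⟨I, hI, (hcF hI).1.2.2.1 a ha⟩
      · rintro r a ⟨I, hI, ha⟩
        exact ⟨I, hI, (hcF hI).1.2.2.2 r a ha⟩
      · rintro n ⟨I, hI, hn⟩
        exact (hcF hI).2 n hn) _ hzF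
    exact ⟨M, hM1, hM2.1, fun J hJ hMJ => hM2.2 hJ hMJ⟩
  refine ⟨M, ⟨hMF.1, ?_, ?_⟩, ?_⟩
  · intro hu
    exact hMF.2 0 (hu ▸ trivial)
  · intro a b hab
    by_contra hcon
    push_neg at hcon
    obtain ⟨ha, hb⟩ := hcon
    have hJa : ∃ m, H.pow x m ∈ H.Jext M a := by
      by_contra hno
      push_neg at hno
      have : H.Jext M a ∈ F := ⟨H.Jext_hyperideal hMF.1 a, hno⟩
      exact ha (hMmax _ this (H.subset_Jext a) (H.mem_Jext_self hMF.1 a))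
    have hJb : ∃ m, H.pow x m ∈ H.Jext M b := by
      by_contra hno
      push_neg at hno
      have : H.Jext M b ∈ F := ⟨H.Jext_hyperideal hMF.1 b, hno⟩
      exact hb (hMmax _ this (H.subset_Jext b) (H.mem_Jext_self hMF.1 b))
    obtain ⟨m, hm⟩ := hJa
    obtain ⟨k, hk⟩ := hJb
    have : H.pow x (m + k) ∈ M := by
      rw [H.pow_add']
      exact H.Jext_mul_mem hMF.1 hab hm hk
    exact hMF.2 _ this
  · intro hxM
    have : H.pow x 1 ∈ M := by rw [H.pow_one']; exact hxM
    exact hMF.2 1 this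

end KHR

namespace KHR

variable {R : Type u}

lemma nil_eq_sInter (H : KHR R) : H.nil = ⋂₀ {P : Set R | H.IsPrime P} := by
  apply Set.Subset.antisymm
  · intro x hx P hP
    exact H.nil_subset_prime hP hx
  · intro x hx
    by_contra hxn
    obtain ⟨P, hP, hxP⟩ := H.exists_prime_not_mem hxn
    exact hxP (hx P hP)

lemma nil_hyperideal (H : KHR R) : H.IsHyperideal H.nil := by
  rw [H.nil_eq_sInter]
  exact H.hyperideal_sInter (fun I hI => hI.1)

lemma genIdeal_singleton_mem (H : KHR R) {x : R} {P : Set R} (hP : H.IsHyperideal P) :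
    H.genIdeal {x} ⊆ P ↔ x ∈ P := by
  constructor
  · intro h
    apply h
    intro I hI
    exact hI.2 rfl
  · intro hx
    exact Set.sInter_subset_of_mem ⟨hP, Set.singleton_subset_iff.mpr hx⟩

lemma genIdeal_hyperideal (H : KHR R) (s : Set R) : H.IsHyperideal (H.genIdeal s) :=
  H.hyperideal_sInter (fun I hI => hI.1)

lemma W_eq (H : KHR R) (x : R) : H.W x = (H.V (H.genIdeal {x}))ᶜ := by
  ext P
  simp only [W, V, Set.mem_setOf_eq, Set.mem_compl_iff]
  rw [H.genIdeal_singleton_mem P.2.1]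

lemma W_open (H : KHR R) (x : R) : H.zariski.IsOpen (H.W x) := by
  rw [H.W_eq]
  exact TopologicalSpace.GenerateOpen.basic _ ⟨_, H.genIdeal_hyperideal {x}, rfl⟩

lemma generic_mem (H : KHR R) (hnil : H.IsPrime H.nil) {U : Set H.Spectrum}
    (hU : H.zariski.IsOpen U) (hne : U.Nonempty) : (⟨H.nil, hnil⟩ : H.Spectrum) ∈ U := by
  induction hU with
  | basic V hV =>
      obtain ⟨I, hI, rfl⟩ := hV
      obtain ⟨P, hP⟩ := hne
      simp only [Set.mem_compl_iff, KHR.V, Set.mem_setOf_eq] at hP ⊢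
      intro hsub
      exact hP (hsub.trans (H.nil_subset_prime P.2))
  | univ => trivial
  | inter U V _ _ ihU ihV =>
      obtain ⟨P, hPU, hPV⟩ := hne
      exact ⟨ihU ⟨P, hPU⟩, ihV ⟨P, hPV⟩⟩
  | sUnion S _ ih =>
      obtain ⟨P, V, hVS, hPV⟩ := hne
      exact ⟨V, hVS, ih V hVS ⟨P, hPV⟩⟩

end KHR

/-- `Spec R` is irreducible for the Zariski topology iff `nil R` is a
prime hyperideal; in particular if `R` is a hyperdomain then `Spec R` is irreducible. -/
theorem stmt13 {R : Type u} (H : KHR R) :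
    (@IrreducibleSpace H.Spectrum H.zariski ↔ H.IsPrime H.nil) ∧
    ((H.zero ≠ H.one ∧ ∀ a b : R, H.mul a b = H.zero → a = H.zero ∨ b = H.zero) →
      @IrreducibleSpace H.Spectrum H.zariski) := by
  letI := H.zariski
  have main : IrreducibleSpace H.Spectrum ↔ H.IsPrime H.nil := by
    constructor
    · intro hirr
      obtain ⟨P0⟩ := hirr.toNonempty
      refine ⟨H.nil_hyperideal, ?_, ?_⟩
      · intro hu
        have : H.one ∈ H.nil := hu ▸ trivial
        exact H.one_not_mem_prime P0.2 (H.nil_subset_prime P0.2 this)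
      · intro a b hab
        by_contra hcon
        push_neg at hcon
        obtain ⟨ha, hb⟩ := hcon
        obtain ⟨Pa, hPa, haPa⟩ := H.exists_prime_not_mem ha
        obtain ⟨Pb, hPb, hbPb⟩ := H.exists_prime_not_mem hb
        have hpre := hirr.isPreirreducible_univ
        have hmeet := hpre (H.W a) (H.W b) (H.W_open a) (H.W_open b)
          ⟨⟨Pa, hPa⟩, trivial, haPa⟩ ⟨⟨Pb, hPb⟩, trivial, hbPb⟩
        obtain ⟨Q, -, hQa, hQb⟩ := hmeet
        have : H.mul a b ∈ Q.1 := H.nil_subset_prime Q.2 hab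
        rcases Q.2.2.2 a b this with h | h
        · exact hQa h
        · exact hQb h
    · intro hnil
      have gp : ∀ U : Set H.Spectrum, IsOpen U → U.Nonempty →
          (⟨H.nil, hnil⟩ : H.Spectrum) ∈ U := fun U hU hne => H.generic_mem hnil hU hne
      refine { toNonempty := ⟨⟨H.nil, hnil⟩⟩, isPreirreducible_univ := ?_ }
      intro U V hU hV hUne hVne
      refine ⟨⟨H.nil, hnil⟩, trivial, ?_, ?_⟩
      · exact gp U hU ⟨hUne.choose, hUne.choose_spec.2⟩
      · exact gp V hV ⟨hVne.choose, hVne.choose_spec.2⟩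
  refine ⟨main, ?_⟩
  rintro ⟨h01, hdom⟩
  apply main.mpr
  have hnil : H.nil = {H.zero} := by
    apply Set.Subset.antisymm
    · rintro x ⟨n, hn⟩
      induction n with
      | zero => rw [H.pow_one'] at hn; exact hn
      | succ n ih =>
          rcases hdom _ _ hn with h | h
          · exact h
          · exact ih h
    · rintro x rfl
      exact ⟨0, by rw [H.pow_one']⟩
  rw [hnil]
  refine ⟨⟨rfl, ?_, ?_, ?_⟩, ?_, ?_⟩
  · rintro a rfl b rfl
    rw [H.zero_hadd]
  · rintro a rfl
    have : H.neg H.zero = H.zero :=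
      (H.neg_unique H.zero H.zero (by rw [H.zero_hadd]; exact rfl)).symm
    simp [this]
  · rintro r a rfl
    exact H.mul_zero' r
  · intro hu
    apply h01
    have : H.one ∈ ({H.zero} : Set R) := hu ▸ trivial
    exact this.symm
  · intro a b hab
    exact hdom a b hab
end
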